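/- Every nonzero element of the group generated by (0,1,4) and (1,0,2) in (ℤ/7ℤ)³ has Mannheim weight at least 3, where the Mannheim weight of (x,y,z) ∈ (ℤ/7ℤ)³ is |x̄|+|ȳ|+|z̄| with x̄ the representative of x in {−3,…,3}. -/
import Mathlib


/-- Mannheim weight on (ℤ/7ℤ)³, using representatives in {-3,…,3}. -/
def wt (v : Fin 3 → ZMod 7) : ℤ := ∑ i, |(v i).valMinAbs|

def C : AddSubgroup (Fin 3 → ZMod 7) := AddSubgroup.closure {![0,1,4], ![1,0,2]}

lemma key : ∀ a b : ZMod 7,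
    a • ![0,1,4] + b • ![1,0,2] ≠ (0 : Fin 3 → ZMod 7) →
    3 ≤ wt (a • ![0,1,4] + b • ![1,0,2]) := by decide

theorem mannheim_weight_ge_three : ∀ v ∈ C, v ≠ 0 → 3 ≤ wt v := by
  intro v hv hne
  have hspan : v ∈ Submodule.span (ZMod 7) ({![0,1,4], ![1,0,2]} : Set (Fin 3 → ZMod 7)) := by
    refine (AddSubgroup.closure_le
      (Submodule.span (ZMod 7) ({![0,1,4], ![1,0,2]} : Set (Fin 3 → ZMod 7))).toAddSubgroup).2
      ?_ hv
    intro x hx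
    exact Submodule.subset_span hx
  obtain ⟨a, b, hab⟩ := Submodule.mem_span_pair.mp hspan
  rw [← hab] at hne ⊢
  exact key a b hne
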